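/- Let B ⊆ ℝ^d be a set of diameter at most M (with the Euclidean metric), D ⊆ B a nonempty finite set, k ≥ 1, α ≥ 1, β > 0, γ ≥ 0, 0 < θ < 1, and assume med_avg(D,k) > 0. Let S = (X_1,…,X_s) be s independent uniform samples from D with s ≥ 3·M·α·(β + α)·ln(1/θ) / (β²·med_avg(D,k)). Let C* be a random subset of B with |C*| = k, measurable as a function of S, such that almost surely cost^med_avg(S, C*) ≤ α·inf_{C ⊆ B, |C| = k} cost^med_avg(S, C) + γ (i.e. C* is the output of an (α,γ)-approximation k-median algorithm run on S). Then Pr[ cost^med_avg(S, C*) ≤ (α + β)·med_avg(D,k) + γ ] ≥ 1 − θ. -/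

import Mathlib

open Finset

/-- Average k-median cost of clustering `C` on the finite set `U` in Euclidean space. -/
noncomputable def costMedAvg {d : ℕ} (U C : Finset (EuclideanSpace ℝ (Fin d))) : ℝ :=
  (∑ v ∈ U, Metric.infDist v (C : Set (EuclideanSpace ℝ (Fin d)))) / U.card

/-- Optimal average k-median cost `med_avg(D, k)`, the infimum being over all
`k`-element sets of centers drawn from `B`. -/
noncomputable def medAvg {d : ℕ} (B : Set (EuclideanSpace ℝ (Fin d)))
    (D : Finset (EuclideanSpace ℝ (Fin d))) (k : ℕ) : ℝ :=
  sInf {y : ℝ | ∃ C : Finset (EuclideanSpace ℝ (Fin d)), ↑C ⊆ B ∧ C.card = k ∧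
    y = ∑ x ∈ D, Metric.infDist x (C : Set (EuclideanSpace ℝ (Fin d)))} / D.card

/-- Average k-median cost of clustering `C` on the sample `f = (X_1, …, X_s)`. -/
noncomputable def sampleCostMed {d : ℕ} {D : Finset (EuclideanSpace ℝ (Fin d))} {s : ℕ}
    (f : Fin s → {x // x ∈ D}) (C : Finset (EuclideanSpace ℝ (Fin d))) : ℝ :=
  (∑ i, Metric.infDist (f i : EuclideanSpace ℝ (Fin d))
    (C : Set (EuclideanSpace ℝ (Fin d)))) / s

/-- Probability of the event `P` under `s` independent uniform samples from `D`,
i.e. under the uniform distribution on `Fin s → D`. -/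
noncomputable def samplePr {V : Type*} (D : Finset V) (s : ℕ)
    (P : (Fin s → {x // x ∈ D}) → Prop) : ℝ :=
  (Nat.card {f : Fin s → {x // x ∈ D} // P f} : ℝ) / ((D.card : ℝ) ^ s)

/-- First auxiliary calculus fact: `6 x log x - 5 x + 5 > 0` for `x > 1`. -/
lemma auxA {x : ℝ} (hx : 1 < x) : 0 < 6*(x*Real.log x) - 5*x + 5 := by
  have hmono : StrictMonoOn (fun y : ℝ => 6*(y*Real.log y) - 5*y + 5) (Set.Ici 1) := by
    apply strictMonoOn_of_deriv_pos (convex_Ici 1)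
    · exact (((continuous_const.mul Real.continuous_mul_log).sub
        (continuous_const.mul continuous_id)).add continuous_const).continuousOn
    · intro y hy
      rw [interior_Ici] at hy
      have hy1 : (1:ℝ) < y := hy
      have hy0 : y ≠ 0 := by linarith
      have hd : HasDerivAt (fun y : ℝ => 6*(y*Real.log y) - 5*y + 5)
          (6*(Real.log y + 1) - 5*1) y :=
        (((Real.hasDerivAt_mul_log hy0).const_mul 6).sub
          ((hasDerivAt_id' (x := y)).const_mul 5)).add_const 5
      rw [hd.deriv]
      have := Real.log_pos hy1
      linarith
  have h := hmono Set.self_mem_Ici (Set.mem_Ici.mpr hx.le) hx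
  simpa [Real.log_one] using h

/-- Second auxiliary calculus fact: `3 x² log x - 4 x² + 5 x - 1 > 0` for `x > 1`. -/
lemma auxB {x : ℝ} (hx : 1 < x) : 0 < 3*(x^2*Real.log x) - 4*x^2 + 5*x - 1 := by
  have hmono : StrictMonoOn (fun y : ℝ => 3*(y^2*Real.log y) - 4*y^2 + 5*y - 1)
      (Set.Ici 1) := by
    apply strictMonoOn_of_deriv_pos (convex_Ici 1)
    · have hco : Continuous (fun y : ℝ => y^2*Real.log y) := by
        have : (fun y : ℝ => y^2*Real.log y) = fun y : ℝ => y * (y * Real.log y) := by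
          funext y; ring
        rw [this]
        exact continuous_id.mul Real.continuous_mul_log
      exact ((((continuous_const.mul hco).sub (continuous_const.mul (continuous_pow 2))).add
        (continuous_const.mul continuous_id)).sub continuous_const).continuousOn
    · intro y hy
      rw [interior_Ici] at hy
      have hy1 : (1:ℝ) < y := hy
      have hy0 : y ≠ 0 := by linarith
      have hd : HasDerivAt (fun y : ℝ => 3*(y^2*Real.log y) - 4*y^2 + 5*y - 1)
          (3*(((2:ℕ):ℝ)*y^(2-1)*Real.log y + y^2*y⁻¹) - 4*(((2:ℕ):ℝ)*y^(2-1)) + 5*1) y :=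
        ((((hasDerivAt_pow 2 y).mul (Real.hasDerivAt_log hy0)).const_mul 3).sub
          ((hasDerivAt_pow 2 y).const_mul 4)).add
          ((hasDerivAt_id' (x := y)).const_mul 5) |>.sub_const 1
      rw [hd.deriv]
      have hA := auxA hy1
      have he : 3*(((2:ℕ):ℝ)*y^(2-1)*Real.log y + y^2*y⁻¹) - 4*(((2:ℕ):ℝ)*y^(2-1)) + 5*1
          = 6*(y*Real.log y) - 5*y + 5 := by
        field_simp
        ring
      rw [he]
      exact hA
  have h := hmono Set.self_mem_Ici (Set.mem_Ici.mpr hx.le) hx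
  norm_num [Real.log_one] at h
  linarith

set_option maxHeartbeats 1600000 in
theorem approx_algorithm_on_sample_is_good_euclidean {d : ℕ}
    (B : Set (EuclideanSpace ℝ (Fin d))) (M : ℝ)
    (hdiam : ∀ u ∈ B, ∀ v ∈ B, dist u v ≤ M)
    (D : Finset (EuclideanSpace ℝ (Fin d))) (hDB : ↑D ⊆ B) (hD : D.Nonempty)
    (k : ℕ) (hk : 1 ≤ k)
    (α β γ θ : ℝ) (hα : 1 ≤ α) (hβ : 0 < β) (hγ : 0 ≤ γ)
    (hθ0 : 0 < θ) (hθ1 : θ < 1)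
    (hpos : 0 < medAvg B D k)
    (s : ℕ)
    (hs : (s : ℝ) ≥ 3 * M * α * (β + α) * Real.log (1 / θ) / (β ^ 2 * medAvg B D k))
    (Cstar : (Fin s → {x // x ∈ D}) → Finset (EuclideanSpace ℝ (Fin d)))
    (hCB : ∀ f, ↑(Cstar f) ⊆ B)
    (hCcard : ∀ f, (Cstar f).card = k)
    (happrox : ∀ f, sampleCostMed f (Cstar f) ≤
      α * sInf {y : ℝ | ∃ C : Finset (EuclideanSpace ℝ (Fin d)),
        ↑C ⊆ B ∧ C.card = k ∧ y = sampleCostMed f C} + γ) :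
    samplePr D s (fun f => sampleCostMed f (Cstar f) ≤ (α + β) * medAvg B D k + γ) ≥
      1 - θ := by
  classical
  set μ := medAvg B D k with hμdef
  set A : Set ℝ := {y : ℝ | ∃ C : Finset (EuclideanSpace ℝ (Fin d)), ↑C ⊆ B ∧ C.card = k ∧
    y = ∑ x ∈ D, Metric.infDist x (C : Set (EuclideanSpace ℝ (Fin d)))} with hA
  have hn : (0:ℝ) < D.card := by exact_mod_cast hD.card_pos
  have hμ : μ = sInf A / D.card := rfl
  have hAbd : ∀ y ∈ A, (0:ℝ) ≤ y := by
    rintro y ⟨C, -, -, rfl⟩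
    exact Finset.sum_nonneg fun x _ => Metric.infDist_nonneg
  have hAbdd : BddBelow A := ⟨0, fun y hy => hAbd y hy⟩
  have hAne : A.Nonempty := by
    by_contra h
    rw [Set.not_nonempty_iff_eq_empty] at h
    rw [hμ, h, Real.sInf_empty, zero_div] at hpos
    exact lt_irrefl _ hpos
  -- M is positive
  have hM : 0 < M := by
    by_contra hM
    push_neg at hM
    obtain ⟨y, hyA⟩ := hAne
    obtain ⟨C, hCB0, hCk, rfl⟩ := hyA
    have hCne : C.Nonempty := Finset.card_pos.mp (by omega)
    obtain ⟨c0, hc0⟩ := hCne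
    have hterm : ∀ x ∈ D, Metric.infDist x (C : Set (EuclideanSpace ℝ (Fin d))) = 0 := by
      intro x hx
      have h1 : Metric.infDist x (C : Set (EuclideanSpace ℝ (Fin d))) ≤ dist x c0 :=
        Metric.infDist_le_dist_of_mem (by exact_mod_cast hc0)
      have h2 : dist x c0 ≤ M := hdiam x (hDB hx) c0 (hCB0 hc0)
      have h3 : (0:ℝ) ≤ Metric.infDist x (C : Set (EuclideanSpace ℝ (Fin d))) :=
        Metric.infDist_nonneg
      linarith
    have hy0 : ∑ x ∈ D, Metric.infDist x (C : Set (EuclideanSpace ℝ (Fin d))) = 0 :=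
      Finset.sum_eq_zero hterm
    have hmem : (0:ℝ) ∈ A := ⟨C, hCB0, hCk, hy0.symm⟩
    have hle : sInf A ≤ 0 := csInf_le hAbdd hmem
    rw [hμ] at hpos
    have : sInf A / (D.card:ℝ) ≤ 0 := div_nonpos_of_nonpos_of_nonneg hle hn.le
    linarith
  have hsInfpos : 0 < sInf A := by
    rw [hμ] at hpos
    by_contra h
    push_neg at h
    have : sInf A / (D.card:ℝ) ≤ 0 := div_nonpos_of_nonpos_of_nonneg h hn.le
    linarith
  have hα0 : (0:ℝ) < α := lt_of_lt_of_le one_pos hα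
  set δ := β / α with hδdef
  have hδ : 0 < δ := div_pos hβ hα0
  have hx1 : (1:ℝ) < 1 + δ := by linarith
  have hlog : 0 < Real.log (1+δ) := Real.log_pos hx1
  set w := δ^2/(3*(1+δ)) with hwdef
  have hw0 : 0 < w := by
    apply div_pos (pow_pos hδ 2); linarith
  set c := (1+δ)*Real.log (1+δ) - δ - w with hcdef
  have hc : 0 < c := by
    have h2 := auxB hx1
    have h3 : c = (3*((1+δ)^2*Real.log (1+δ)) - 4*(1+δ)^2 + 5*(1+δ) - 1) / (3*(1+δ)) := by
      rw [hcdef, hwdef]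
      field_simp
      ring
    rw [h3]
    exact div_pos h2 (by linarith)
  set L := Real.log (1/θ) with hLdef
  have hL : 0 < L := Real.log_pos (by rw [lt_div_iff₀ hθ0]; linarith)
  have hLθ : Real.log θ = -L := by
    rw [hLdef, one_div, Real.log_inv, neg_neg]
  -- s is positive
  have hs0 : (0:ℝ) < s := by
    have hnum : 0 < 3 * M * α * (β + α) * L :=
      mul_pos (mul_pos (mul_pos (by linarith) hα0) (by linarith)) hL
    have hden : 0 < β ^ 2 * μ := mul_pos (pow_pos hβ 2) hpos
    calc (0:ℝ) < 3 * M * α * (β + α) * L / (β ^ 2 * μ) := div_pos hnum hden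
    _ ≤ s := hs
  -- choose a near-optimal clustering C₀ of D
  have hε : 0 < (D.card:ℝ) * μ * c / δ := div_pos (mul_pos (mul_pos hn hpos) hc) hδ
  obtain ⟨y0, hy0A, hy0lt⟩ := Real.lt_sInf_add_pos hAne hε
  rw [hA] at hy0A
  obtain ⟨C₀, hC₀B, hC₀k, rfl⟩ := hy0A
  set T₀ := ∑ x ∈ D, Metric.infDist x (C₀ : Set (EuclideanSpace ℝ (Fin d))) with hT₀def
  have hC₀ne : C₀.Nonempty := Finset.card_pos.mp (by omega)
  obtain ⟨c₀, hc₀⟩ := hC₀ne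
  have hg0 : ∀ x : {x // x ∈ D},
      0 ≤ Metric.infDist (x : EuclideanSpace ℝ (Fin d)) (C₀ : Set (EuclideanSpace ℝ (Fin d))) :=
    fun x => Metric.infDist_nonneg
  have hgM : ∀ x : {x // x ∈ D},
      Metric.infDist (x : EuclideanSpace ℝ (Fin d)) (C₀ : Set (EuclideanSpace ℝ (Fin d))) ≤ M := by
    intro x
    calc Metric.infDist (x : EuclideanSpace ℝ (Fin d)) (C₀ : Set (EuclideanSpace ℝ (Fin d)))
        ≤ dist (x : EuclideanSpace ℝ (Fin d)) c₀ :=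
          Metric.infDist_le_dist_of_mem (by exact_mod_cast hc₀)
      _ ≤ M := hdiam _ (hDB x.2) _ (hC₀B hc₀)
  have hT₀0 : 0 ≤ T₀ := Finset.sum_nonneg fun x _ => Metric.infDist_nonneg
  set t := Real.log (1+δ) / M with htdef
  have ht : 0 < t := div_pos hlog hM
  have hexp_tM : Real.exp (t*M) = 1 + δ := by
    rw [htdef, div_mul_cancel₀ _ hM.ne', Real.exp_log (by linarith)]
  -- pointwise exponential-moment bound
  have hpt : ∀ x : {x // x ∈ D},
      Real.exp (t * Metric.infDist (x : EuclideanSpace ℝ (Fin d))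
        (C₀ : Set (EuclideanSpace ℝ (Fin d)))) ≤
      1 + (δ/M) * Metric.infDist (x : EuclideanSpace ℝ (Fin d))
        (C₀ : Set (EuclideanSpace ℝ (Fin d))) := by
    intro x
    set y := Metric.infDist (x : EuclideanSpace ℝ (Fin d))
      (C₀ : Set (EuclideanSpace ℝ (Fin d))) with hy
    have hy0 : 0 ≤ y := hg0 x
    have hyM : y ≤ M := hgM x
    have ha : (0:ℝ) ≤ 1 - y/M := by
      rw [sub_nonneg, div_le_one hM]; exact hyM
    have hb : (0:ℝ) ≤ y/M := div_nonneg hy0 hM.le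
    have hab : (1 - y/M) + y/M = 1 := by ring
    have hcx := convexOn_exp.2 (Set.mem_univ (0:ℝ)) (Set.mem_univ (t*M)) ha hb hab
    simp only [smul_eq_mul, mul_zero, zero_add, Real.exp_zero, mul_one] at hcx
    rw [hexp_tM] at hcx
    have h1 : (y/M)*(t*M) = t*y := by field_simp
    rw [h1] at hcx
    have h2 : 1 - y/M + y/M*(1+δ) = 1 + (δ/M)*y := by field_simp; ring
    linarith
  -- sum bound
  set u := δ*T₀/((D.card:ℝ)*M) with hudef
  have hsum_subtype : ∑ x : {x // x ∈ D},
      Metric.infDist (x : EuclideanSpace ℝ (Fin d)) (C₀ : Set (EuclideanSpace ℝ (Fin d))) = T₀ := by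
    rw [hT₀def, Finset.univ_eq_attach]
    exact Finset.sum_attach D (fun x => Metric.infDist x (C₀ : Set (EuclideanSpace ℝ (Fin d))))
  have hS : ∑ x : {x // x ∈ D}, Real.exp (t * Metric.infDist (x : EuclideanSpace ℝ (Fin d))
      (C₀ : Set (EuclideanSpace ℝ (Fin d)))) ≤ (D.card : ℝ) * Real.exp u := by
    have hcard : (Fintype.card {x // x ∈ D} : ℝ) = (D.card : ℝ) := by
      rw [Fintype.card_coe]
    calc ∑ x : {x // x ∈ D}, Real.exp (t * Metric.infDist (x : EuclideanSpace ℝ (Fin d))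
          (C₀ : Set (EuclideanSpace ℝ (Fin d))))
        ≤ ∑ x : {x // x ∈ D}, (1 + (δ/M) * Metric.infDist (x : EuclideanSpace ℝ (Fin d))
          (C₀ : Set (EuclideanSpace ℝ (Fin d)))) := Finset.sum_le_sum fun x _ => hpt x
      _ = (D.card : ℝ) + (δ/M) * T₀ := by
          rw [Finset.sum_add_distrib, Finset.sum_const, ← Finset.mul_sum, hsum_subtype]
          simp [Finset.card_univ, Fintype.card_coe, nsmul_eq_mul, mul_one]
      _ = (D.card : ℝ) * (1 + u) := by
          rw [hudef]; field_simp
      _ ≤ (D.card : ℝ) * Real.exp u := by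
          have := Real.add_one_le_exp u
          have h1 : 1 + u ≤ Real.exp u := by linarith
          exact mul_le_mul_of_nonneg_left h1 hn.le
  -- the event and the bad set
  set P : (Fin s → {x // x ∈ D}) → Prop :=
    fun f => sampleCostMed f (Cstar f) ≤ (α + β) * μ + γ with hP
  set bad := Finset.univ.filter (fun f : Fin s → {x // x ∈ D} => ¬ P f) with hbad
  set a := (s:ℝ)*((1+δ)*μ) with hadef
  -- if the sample cost of C₀ is small then the event holds
  have himp : ∀ f : Fin s → {x // x ∈ D},
      (∑ i, Metric.infDist ((f i : EuclideanSpace ℝ (Fin d)))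
        (C₀ : Set (EuclideanSpace ℝ (Fin d)))) ≤ a → P f := by
    intro f hf
    have h1 : sampleCostMed f C₀ ≤ (1+δ)*μ := by
      rw [sampleCostMed, div_le_iff₀ hs0]
      calc (∑ i, Metric.infDist ((f i : EuclideanSpace ℝ (Fin d)))
          (C₀ : Set (EuclideanSpace ℝ (Fin d)))) ≤ a := hf
        _ = (1+δ)*μ*(s:ℝ) := by rw [hadef]; ring
    have hbddS : BddBelow {y : ℝ | ∃ C : Finset (EuclideanSpace ℝ (Fin d)),
        ↑C ⊆ B ∧ C.card = k ∧ y = sampleCostMed f C} := by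
      refine ⟨0, ?_⟩
      rintro y ⟨C, -, -, rfl⟩
      exact div_nonneg (Finset.sum_nonneg fun i _ => Metric.infDist_nonneg) (Nat.cast_nonneg s)
    have hmem : sampleCostMed f C₀ ∈ {y : ℝ | ∃ C : Finset (EuclideanSpace ℝ (Fin d)),
        ↑C ⊆ B ∧ C.card = k ∧ y = sampleCostMed f C} := ⟨C₀, hC₀B, hC₀k, rfl⟩
    have h2 := csInf_le hbddS hmem
    have hαδ : α * ((1+δ)*μ) = (α+β)*μ := by
      rw [hδdef]; field_simp
    calc sampleCostMed f (Cstar f)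
        ≤ α * sInf {y : ℝ | ∃ C : Finset (EuclideanSpace ℝ (Fin d)),
            ↑C ⊆ B ∧ C.card = k ∧ y = sampleCostMed f C} + γ := happrox f
      _ ≤ α * ((1+δ)*μ) + γ := by
          have h3 : sInf {y : ℝ | ∃ C : Finset (EuclideanSpace ℝ (Fin d)),
              ↑C ⊆ B ∧ C.card = k ∧ y = sampleCostMed f C} ≤ (1+δ)*μ := le_trans h2 h1
          nlinarith [h3, hα0]
      _ = (α+β)*μ + γ := by rw [hαδ]
  have hbadle : ∀ f ∈ bad, a ≤ ∑ i, Metric.infDist ((f i : EuclideanSpace ℝ (Fin d)))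
      (C₀ : Set (EuclideanSpace ℝ (Fin d))) := by
    intro f hf
    rw [hbad, Finset.mem_filter] at hf
    by_contra hcon
    push_neg at hcon
    exact hf.2 (himp f hcon.le)
  -- Markov / Chernoff counting
  have hmarkov : (bad.card : ℝ) * Real.exp (t*a) ≤
      (∑ x : {x // x ∈ D}, Real.exp (t * Metric.infDist (x : EuclideanSpace ℝ (Fin d))
        (C₀ : Set (EuclideanSpace ℝ (Fin d)))))^s := by
    calc (bad.card : ℝ) * Real.exp (t*a)
        = ∑ _f ∈ bad, Real.exp (t*a) := by rw [Finset.sum_const, nsmul_eq_mul]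
      _ ≤ ∑ f ∈ bad, Real.exp (t * ∑ i, Metric.infDist ((f i : EuclideanSpace ℝ (Fin d)))
            (C₀ : Set (EuclideanSpace ℝ (Fin d)))) :=
          Finset.sum_le_sum fun f hf => Real.exp_le_exp.mpr
            (mul_le_mul_of_nonneg_left (hbadle f hf) ht.le)
      _ ≤ ∑ f : Fin s → {x // x ∈ D}, Real.exp (t * ∑ i,
            Metric.infDist ((f i : EuclideanSpace ℝ (Fin d)))
            (C₀ : Set (EuclideanSpace ℝ (Fin d)))) :=
          Finset.sum_le_sum_of_subset_of_nonneg (Finset.subset_univ _)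
            (fun _ _ _ => (Real.exp_pos _).le)
      _ = (∑ x : {x // x ∈ D}, Real.exp (t * Metric.infDist (x : EuclideanSpace ℝ (Fin d))
            (C₀ : Set (EuclideanSpace ℝ (Fin d)))))^s := by
          rw [Fintype.sum_pow]
          exact Finset.sum_congr rfl fun f _ => by rw [Finset.mul_sum, Real.exp_sum]
  have hpow : (∑ x : {x // x ∈ D}, Real.exp (t * Metric.infDist (x : EuclideanSpace ℝ (Fin d))
      (C₀ : Set (EuclideanSpace ℝ (Fin d)))))^s ≤ ((D.card:ℝ))^s * Real.exp ((s:ℝ)*u) := by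
    calc (∑ x : {x // x ∈ D}, Real.exp (t * Metric.infDist (x : EuclideanSpace ℝ (Fin d))
        (C₀ : Set (EuclideanSpace ℝ (Fin d)))))^s
        ≤ ((D.card:ℝ) * Real.exp u)^s :=
          pow_le_pow_left₀ (Finset.sum_nonneg fun x _ => (Real.exp_pos _).le) hS s
      _ = ((D.card:ℝ))^s * Real.exp ((s:ℝ)*u) := by
          rw [mul_pow, Real.exp_nat_mul]
  -- the exponent is at most log θ
  have hexp : (s:ℝ)*u - t*a ≤ Real.log θ := by
    have hsInfA : sInf A = μ * (D.card:ℝ) := by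
      rw [hμ, div_mul_cancel₀ _ hn.ne']
    rw [hsInfA] at hy0lt
    -- δ * T₀ ≤ (δ*μ + c*μ) * D.card
    have hT1 : δ * T₀ ≤ δ * (μ * (D.card:ℝ) + (D.card:ℝ) * μ * c / δ) :=
      mul_le_mul_of_nonneg_left hy0lt.le hδ.le
    have hT2 : δ * (μ * (D.card:ℝ) + (D.card:ℝ) * μ * c / δ) = (δ*μ + c*μ) * (D.card:ℝ) := by
      rw [mul_add, mul_div_assoc', mul_comm δ ((D.card:ℝ)*μ*c), mul_div_assoc, div_self hδ.ne']; ring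
    have hT3 : δ * T₀ ≤ (δ*μ + c*μ) * (D.card:ℝ) := by rw [← hT2]; exact hT1
    have e1 : (s:ℝ)*u ≤ (s:ℝ)*((δ*μ + c*μ)/M) := by
      apply mul_le_mul_of_nonneg_left _ (le_of_lt hs0)
      rw [hudef, div_le_div_iff₀ (mul_pos hn hM) hM]
      nlinarith [hT3, hM, hn]
    have e2 : t*a = (s:ℝ)*((1+δ)*Real.log (1+δ)*μ/M) := by
      rw [htdef, hadef]; ring
    have e3 : (1+δ)*Real.log (1+δ) = δ + c + w := by rw [hcdef]; ring
    have e4 : (s:ℝ)*((δ*μ + c*μ)/M) - (s:ℝ)*((δ + c + w)*μ/M) = -((s:ℝ)*(μ*w/M)) := by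
      ring
    have e5 : L ≤ (s:ℝ)*(μ*w/M) := by
      have hwβ : w = β^2/(3*α*(α+β)) := by
        rw [hwdef, hδdef]
        field_simp
      have hs' : 3 * M * α * (β + α) * L ≤ (s:ℝ)*(β^2*μ) :=
        (div_le_iff₀ (mul_pos (pow_pos hβ 2) hpos)).mp hs
      rw [hwβ]
      have hrw : (s:ℝ)*(μ*(β^2/(3*α*(α+β)))/M) = (s:ℝ)*(β^2*μ)/(M*(3*α*(α+β))) := by
        field_simp
      rw [hrw, le_div_iff₀ (by positivity)]
      calc L * (M*(3*α*(α+β))) = 3 * M * α * (β + α) * L := by ring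
        _ ≤ (s:ℝ)*(β^2*μ) := hs'
    calc (s:ℝ)*u - t*a ≤ (s:ℝ)*((δ*μ + c*μ)/M) - (s:ℝ)*((δ + c + w)*μ/M) := by
          rw [e2, e3] at *
          linarith [e1]
      _ = -((s:ℝ)*(μ*w/M)) := e4
      _ ≤ -L := by linarith
      _ = Real.log θ := hLθ.symm
  -- conclude: the bad set is small
  have hfinal : (bad.card : ℝ) ≤ θ * (D.card:ℝ)^s := by
    have h6 : (bad.card : ℝ) * Real.exp (t*a) ≤ ((D.card:ℝ))^s * Real.exp ((s:ℝ)*u) :=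
      le_trans hmarkov hpow
    have h7 : (bad.card : ℝ) ≤ (D.card:ℝ)^s * Real.exp ((s:ℝ)*u - t*a) := by
      rw [Real.exp_sub, ← mul_div_assoc, le_div_iff₀ (Real.exp_pos _)]
      exact h6
    calc (bad.card : ℝ) ≤ (D.card:ℝ)^s * Real.exp ((s:ℝ)*u - t*a) := h7
      _ ≤ (D.card:ℝ)^s * Real.exp (Real.log θ) :=
          mul_le_mul_of_nonneg_left (Real.exp_le_exp.mpr hexp) (pow_nonneg hn.le s)
      _ = θ * (D.card:ℝ)^s := by rw [Real.exp_log hθ0]; ring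
  -- convert to the probability statement
  have hcards : ((Finset.univ.filter P).card : ℝ) = (D.card:ℝ)^s - bad.card := by
    have h2 : (Finset.univ.filter P).card + bad.card = D.card ^ s := by
      rw [hbad, Finset.card_filter_add_card_filter_not]
      simp [Finset.card_univ]
    have h3 : ((Finset.univ.filter P).card : ℝ) + bad.card = (D.card:ℝ)^s := by
      exact_mod_cast congrArg (Nat.cast : ℕ → ℝ) h2
    linarith
  have hNat : (Nat.card {f : Fin s → {x // x ∈ D} // P f} : ℝ) =
      ((Finset.univ.filter P).card : ℝ) := by
    rw [Nat.card_eq_fintype_card, Fintype.card_subtype]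
  show samplePr D s P ≥ 1 - θ
  rw [samplePr, hNat, hcards, ge_iff_le, le_div_iff₀ (pow_pos hn s)]
  nlinarith [hfinal, pow_pos hn s]
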